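/- arXiv:2309.11678 — 3 statements merged into one kernel-verified Lean document; each statement's English description precedes it below -/
import Mathlib

section
/- The equivalence relation E₀ on 2^ℕ, where η E₀ η' iff η(n) = η'(n) for all but finitely many n, is not smooth: there is no Borel function f from 2^ℕ to a Polish space (equivalently to 2^ℕ) such that f(η) = f(η') iff η E₀ η'. -/
/-!
Give `2^ℕ` the fair coin-tossing measure. A Borel set invariant under `E₀` is a tail event, so by
Kolmogorov's 0-1 law it has measure 0 or 1. Hence a Borel map `f` with `f η = f η' ↔ η E₀ η'`
is a.e. constant, and a single `E₀`-class, i.e. a fibre of `f`, has full measure. But `E₀`-classes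
are countable and the coin-tossing measure has no atoms.
-/

open MeasureTheory ProbabilityTheory Filter Set
open scoped ENNReal

variable {β : Type*}

theorem countable_setOf_eventuallyEq_cofinite {ι : Type*} [Countable ι] [Countable β]
    (x : ι → β) : {y : ι → β | y =ᶠ[cofinite] x}.Countable := by
  classical
  have hsub : {y : ι → β | y =ᶠ[cofinite] x} ⊆
      ⋃ s : Finset ι, range fun g : s → β ↦ fun i ↦ if h : i ∈ s then g ⟨i, h⟩ else x i := by
    intro y (hy : {i | y i ≠ x i}.Finite)
    refine mem_iUnion.2 ⟨hy.toFinset, fun i ↦ y i, funext fun i ↦ ?_⟩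
    by_cases hi : i ∈ hy.toFinset
    · simp [hi]
    · have hyx : y i = x i := by simpa using hi
      simp [hi, hyx]
  exact (countable_iUnion fun s ↦ countable_range _).mono hsub

section Measurable

variable [MeasurableSpace β]

theorem measurableSet_limsup_comap_eval_of_cofinite_invariant {t : Set (ℕ → β)}
    (ht : MeasurableSet t) (hinv : ∀ x y : ℕ → β, x =ᶠ[cofinite] y → (x ∈ t ↔ y ∈ t)) :
    MeasurableSet[limsup (fun n ↦ MeasurableSpace.comap (fun x : ℕ → β ↦ x n) ‹_›) atTop] t := by
  rcases isEmpty_or_nonempty β with _ | ⟨⟨c⟩⟩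
  · rw [eq_empty_of_isEmpty t]
    exact @MeasurableSet.empty _ (limsup _ atTop)
  rw [limsup_eq_iInf_iSup_of_nat, MeasurableSpace.measurableSet_iInf]
  intro n
  -- Resetting the first `n` coordinates preserves membership in `t` and forgets those coordinates.
  set mₙ := ⨆ i ≥ n, MeasurableSpace.comap (fun x : ℕ → β ↦ x i) ‹_›
  let φ : (ℕ → β) → ℕ → β := fun x i ↦ if i < n then c else x i
  have hφ : Measurable[mₙ, MeasurableSpace.pi] φ := by
    refine @measurable_pi_lambda _ _ _ mₙ _ φ fun j ↦ ?_
    by_cases hj : j < n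
    · simp only [φ, hj, if_true]
      exact measurable_const
    · simp only [φ, hj, if_false]
      exact Measurable.of_comap_le (le_iSup₂ (f := fun i (_ : i ≥ n) ↦
        MeasurableSpace.comap (fun x : ℕ → β ↦ x i) ‹_›) j (not_lt.1 hj))
  have hφt : φ ⁻¹' t = t := by
    ext x
    refine hinv (φ x) x ?_
    rw [EventuallyEq, Nat.cofinite_eq_atTop]
    filter_upwards [eventually_ge_atTop n] with i hi
    simp [φ, hi.not_gt]
  exact hφt ▸ hφ ht

theorem measure_eq_zero_or_one_of_cofinite_invariant {μ : Measure (ℕ → β)}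
    (hμ : iIndepFun (fun n (x : ℕ → β) ↦ x n) μ) {t : Set (ℕ → β)} (ht : MeasurableSet t)
    (hinv : ∀ x y : ℕ → β, x =ᶠ[cofinite] y → (x ∈ t ↔ y ∈ t)) :
    μ t = 0 ∨ μ t = 1 :=
  measure_zero_or_one_of_measurableSet_limsup_atTop (fun n ↦ (measurable_pi_apply n).comap_le)
    ((iIndepFun_iff_iIndep _ _ _).1 hμ)
    (measurableSet_limsup_comap_eval_of_cofinite_invariant ht hinv)

theorem exists_ae_eq_const_of_cofinite_invariant {γ : Type*}
    [MeasurableSpace γ] [MeasurableSpace.CountablySeparated γ] [Nonempty γ]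
    {μ : Measure (ℕ → β)} (hμ : iIndepFun (fun n (x : ℕ → β) ↦ x n) μ)
    {f : (ℕ → β) → γ} (hf : Measurable f) (hinv : ∀ x y, x =ᶠ[cofinite] y → f x = f y) :
    ∃ c, f =ᵐ[μ] Function.const _ c := by
  have := hμ.isProbabilityMeasure
  refine exists_eventuallyEq_const_of_forall_separating MeasurableSet fun U hU ↦ ?_
  rcases measure_eq_zero_or_one_of_cofinite_invariant hμ (hf hU)
    (fun x y hxy ↦ by rw [mem_preimage, mem_preimage, hinv x y hxy]) with h | h
  · exact .inr (measure_eq_zero_iff_ae_notMem.1 h)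
  · exact .inl ((ae_iff_measure_eq (hf hU).nullMeasurableSet).2 (h.trans measure_univ.symm))

theorem not_exists_measurable_eq_iff_eventuallyEq_cofinite [Countable β]
    {γ : Type*} [MeasurableSpace γ] [MeasurableSpace.CountablySeparated γ]
    (μ : Measure (ℕ → β)) [NullSingletonClass μ] (hμ : iIndepFun (fun n (x : ℕ → β) ↦ x n) μ) :
    ¬ ∃ f : (ℕ → β) → γ, Measurable f ∧ ∀ x y, f x = f y ↔ x =ᶠ[cofinite] y := by
  rintro ⟨f, hf, hfE⟩
  have := hμ.isProbabilityMeasure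
  obtain ⟨x₀⟩ := nonempty_of_isProbabilityMeasure μ
  have : Nonempty γ := ⟨f x₀⟩
  obtain ⟨c, hc⟩ := exists_ae_eq_const_of_cofinite_invariant hμ hf fun x y ↦ (hfE x y).2
  obtain ⟨x₁, hx₁⟩ := hc.exists
  have hclass : ∀ᵐ x ∂μ, x ∈ {y | y =ᶠ[cofinite] x₁} :=
    hc.mono fun x hx ↦ (hfE x x₁).1 (hx.trans hx₁.symm)
  obtain ⟨x, hx, hx'⟩ :=
    (hclass.and ((countable_setOf_eventuallyEq_cofinite x₁).ae_notMem μ)).exists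
  exact hx' hx

theorem MeasureTheory.Measure.infinitePi_singleton_eq_zero [MeasurableSingletonClass β]
    (ν : Measure β) [IsProbabilityMeasure ν] {q : ℝ≥0∞} (hq : q < 1) (hν : ∀ b, ν {b} ≤ q)
    (x : ℕ → β) : Measure.infinitePi (fun _ ↦ ν) {x} = 0 := by
  refine le_antisymm (ge_of_tendsto' (ENNReal.tendsto_pow_atTop_nhds_zero_of_lt_one hq)
    fun n ↦ ?_) zero_le
  calc Measure.infinitePi (fun _ ↦ ν) {x}
      ≤ Measure.infinitePi (fun _ ↦ ν) ((Finset.range n : Set ℕ).pi fun i ↦ {x i}) :=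
        measure_mono (by simp)
    _ = ∏ i ∈ Finset.range n, ν {x i} :=
        Measure.infinitePi_pi _ fun i _ ↦ measurableSet_singleton (x i)
    _ ≤ q ^ n := by
        simpa using Finset.prod_le_pow_card (Finset.range n) _ q fun i _ ↦ hν (x i)

end Measurable

noncomputable abbrev coinTossing : Measure (ℕ → Bool) :=
  Measure.infinitePi fun _ ↦ (PMF.uniformOfFintype Bool).toMeasure

instance : NullSingletonClass coinTossing :=
  ⟨Measure.infinitePi_singleton_eq_zero _ (q := 2⁻¹) (by norm_num) fun b ↦ by simp⟩

/-- The relation `E₀` on Cantor space `2^ℕ` (eventual agreement) is not smooth: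
no Borel map `f : 2^ℕ → 2^ℕ` satisfies `f η = f η' ↔ η E₀ η'`. -/
theorem E0_not_smooth :
    ¬ ∃ f : (ℕ → Bool) → (ℕ → Bool), Measurable f ∧
      ∀ η η' : ℕ → Bool, f η = f η' ↔ {n : ℕ | η n ≠ η' n}.Finite :=
  not_exists_measurable_eq_iff_eventuallyEq_cofinite coinTossing
    (iIndepFun_infinitePi (X := fun _ b ↦ b) fun _ ↦ measurable_id)
end

section
/- Let Γ be a group acting by homeomorphisms on a Polish space X such that some orbit is dense, and let R ⊆ X² be the orbit equivalence relation. If R is meager in X², then R is not smooth. -/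
/-!
By the topological zero-one law, an invariant Baire measurable set of a Polish space with a dense
orbit is meagre or comeagre. Applied to the preimages of a countable separating family of Borel
sets, this makes any Borel reduction `f` of the orbit equivalence relation `R` constant on a
comeagre set `C`. Then `C × C ⊆ R` is comeagre in `X × X`, so `R` cannot be meagre.
-/

open Filter Topology Set MulAction

section Baire

variable {X : Type*} [TopologicalSpace X]

lemma isMeagre_diff_of_residualEq {s t : Set X} (h : s =ᵇ t) : IsMeagre (s \ t) := by
  rw [IsMeagre]
  filter_upwards [h] with x hx hxst using hxst.2 ((iff_of_eq hx).1 hxst.1)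

lemma prod_mem_residual {Y : Type*} [TopologicalSpace Y] {s : Set X} {t : Set Y}
    (hs : s ∈ residual X) (ht : t ∈ residual Y) : s ×ˢ t ∈ residual (X × Y) := by
  rw [Set.prod_eq]
  exact inter_mem (tendsto_residual_of_isOpenMap continuous_fst isOpenMap_fst hs)
    (tendsto_residual_of_isOpenMap continuous_snd isOpenMap_snd ht)

end Baire

namespace MulAction

variable {X : Type*} [TopologicalSpace X] [BaireSpace X]
  {Γ : Type*} [Group Γ] [MulAction Γ X] [ContinuousConstSMul Γ X]

theorem mem_residual_or_isMeagre_of_smul_invariant {x₀ : X}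
    (hx₀ : Dense (orbit Γ x₀ : Set X)) {A : Set X} (hA : BaireMeasurableSet A)
    (hinv : ∀ γ : Γ, (γ • ·) ⁻¹' A = A) : A ∈ residual X ∨ IsMeagre A := by
  obtain ⟨U, hUo, hAU⟩ := hA.residualEq_isOpen
  rcases U.eq_empty_or_nonempty with rfl | hUne
  · exact Or.inr (by simpa using isMeagre_diff_of_residualEq hAU)
  left
  obtain ⟨_, ⟨δ, rfl⟩, hδU⟩ := hx₀.exists_mem_open hUo hUne
  have hUd : Dense U := by
    refine dense_iff_inter_open.2 fun V hVo hVne => ?_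
    obtain ⟨_, ⟨γ, rfl⟩, hγV⟩ := hx₀.exists_mem_open hVo hVne
    by_contra hVU
    -- `g` carries the point `γ • x₀` of `V` to the point `δ • x₀` of `U`, and `g⁻¹ U =ᵇ A =ᵇ U`.
    set g : Γ := δ * γ⁻¹
    have hgU : (g • ·) ⁻¹' U =ᵇ U := by
      have h : (g • ·) ⁻¹' A =ᵇ (g • ·) ⁻¹' U := hAU.comp_tendsto
        (tendsto_residual_of_isOpenMap (continuous_const_smul g) (isOpenMap_smul g))
      rw [hinv g] at h
      exact h.symm.trans hAU
    have hW : (V ∩ (g • ·) ⁻¹' U).Nonempty := ⟨γ • x₀, hγV, by simpa [g, smul_smul] using hδU⟩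
    have hWU : V ∩ (g • ·) ⁻¹' U ⊆ (g • ·) ⁻¹' U \ U := fun x hx =>
      ⟨hx.2, fun hxU => hVU ⟨x, hx.1, hxU⟩⟩
    exact not_isMeagre_of_isOpen (hVo.inter (hUo.preimage (continuous_const_smul g))) hW
      ((isMeagre_diff_of_residualEq hgU).mono hWU)
  filter_upwards [residual_of_dense_open hUo hUd, hAU] with x hxU hx using (iff_of_eq hx).2 hxU

theorem exists_eventuallyEq_const_of_smul_invariant [MeasurableSpace X] [BorelSpace X]
    {x₀ : X} (hx₀ : Dense (orbit Γ x₀ : Set X))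
    {Z : Type*} [MeasurableSpace Z] [MeasurableSpace.CountablySeparated Z] {f : X → Z}
    (hf : Measurable f) (hinv : ∀ (γ : Γ) (x : X), f (γ • x) = f x) :
    ∃ z, f =ᶠ[residual X] Function.const X z := by
  have : Nonempty Z := ⟨f x₀⟩
  refine exists_eventuallyEq_const_of_forall_separating MeasurableSet fun U hU => ?_
  refine mem_residual_or_isMeagre_of_smul_invariant hx₀ (hf hU).baireMeasurableSet fun γ => ?_
  ext x
  simp [hinv]

end MulAction

/-- Becker–Kechris (with Harrington–Kechris–Louveau): if a group `Γ` acts by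
homeomorphisms on a Polish space `X` with a dense orbit, and the orbit equivalence
relation `R` is meager in `X²`, then `R` is not smooth. -/
theorem orbit_equivalence_meager_not_smooth
    {X : Type*} [TopologicalSpace X] [PolishSpace X] [MeasurableSpace X] [BorelSpace X]
    {Γ : Type*} [Group Γ] [MulAction Γ X]
    (hcont : ∀ γ : Γ, Continuous fun x : X => γ • x)
    (hdense : ∃ x : X, Dense (MulAction.orbit Γ x : Set X))
    (hmeager : IsMeagre {p : X × X | p.2 ∈ MulAction.orbit Γ p.1}) :
    ¬ ∃ (Z : Type) (tZ : TopologicalSpace Z), @PolishSpace Z tZ ∧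
      ∃ f : X → Z, @Measurable X Z _ (@borel Z tZ) f ∧
        ∀ x y : X, f x = f y ↔ y ∈ MulAction.orbit Γ x := by
  have : ContinuousConstSMul Γ X := ⟨hcont⟩
  obtain ⟨x₀, hx₀⟩ := hdense
  have : Nonempty X := ⟨x₀⟩
  rintro ⟨Z, tZ, hZ, f, hf, hfR⟩
  borelize Z
  have hinv : ∀ (γ : Γ) (x : X), f (γ • x) = f x := fun γ x => ((hfR x _).2 (mem_orbit x γ)).symm
  obtain ⟨z, hz⟩ := exists_eventuallyEq_const_of_smul_invariant hx₀ hf hinv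
  have hR : {p : X × X | p.2 ∈ orbit Γ p.1} ∈ residual (X × X) :=
    mem_of_superset (prod_mem_residual hz hz) fun p hp => (hfR _ _).1 (hp.1.trans hp.2.symm)
  exact not_isMeagre_of_mem_residual hR hmeager
end

section
/- There is no Borel-measurable injection from the quotient 2^ℕ/E₀ into a Polish space induced by a Borel map on 2^ℕ; that is, there is no Borel map f from 2^ℕ into a Polish space reducing E₀ to equality. -/
open Topology Filter Set

namespace E0Aux

/-- Cylinder: functions agreeing with `s` below `n`. -/
def cyl (n : ℕ) (s : ℕ → Bool) : Set (ℕ → Bool) := {η | ∀ i < n, η i = s i}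

lemma isOpen_cyl (n : ℕ) (s : ℕ → Bool) : IsOpen (cyl n s) := by
  have h : cyl n s = ⋂ i ∈ Finset.range n, (fun η : ℕ → Bool => η i) ⁻¹' {s i} := by
    ext η; simp [cyl]
  rw [h]
  exact isOpen_biInter_finset fun i _ =>
    (continuous_apply i).isOpen_preimage _ (isOpen_discrete _)

lemma cyl_subset {U : Set (ℕ → Bool)} (hU : IsOpen U) {η : ℕ → Bool} (hη : η ∈ U) :
    ∃ n, cyl n η ⊆ U := by
  rcases isOpen_pi_iff.mp hU η hη with ⟨I, u, h1, h2⟩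
  refine ⟨(I.sup id) + 1, fun x hx => h2 fun a ha => ?_⟩
  have hax : x a = η a := hx a (Nat.lt_succ_of_le (Finset.le_sup (f := id) ha))
  rw [hax]; exact (h1 a ha).2

/-- xor with a fixed `c`, as a function on `2^ℕ`. -/
def xorF (c : ℕ → Bool) : (ℕ → Bool) → (ℕ → Bool) := fun η n => xor (η n) (c n)

lemma continuous_xorF (c : ℕ → Bool) : Continuous (xorF c) := by
  refine continuous_pi fun n => ?_
  have h : (fun η : ℕ → Bool => xorF c η n) = (fun b => xor b (c n)) ∘ (fun η => η n) := rfl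
  rw [h]
  exact continuous_of_discreteTopology.comp (continuous_apply n)

/-- The homeomorphism of `2^ℕ` given by xor with a fixed `c`. -/
def xorH (c : ℕ → Bool) : (ℕ → Bool) ≃ₜ (ℕ → Bool) where
  toFun := xorF c
  invFun := xorF c
  left_inv η := funext fun n => by
    show xor (xor (η n) (c n)) (c n) = η n
    cases η n <;> cases c n <;> rfl
  right_inv η := funext fun n => by
    show xor (xor (η n) (c n)) (c n) = η n
    cases η n <;> cases c n <;> rfl
  continuous_toFun := continuous_xorF c
  continuous_invFun := continuous_xorF c

/-- Topological zero-one law for `E₀`-invariant Baire measurable sets. -/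
lemma meager_or_comeager {A : Set (ℕ → Bool)} (hA : BaireMeasurableSet A)
    (hinv : ∀ η η' : ℕ → Bool, {n | η n ≠ η' n}.Finite → (η ∈ A ↔ η' ∈ A)) :
    IsMeagre A ∨ IsMeagre Aᶜ := by
  obtain ⟨U, hUo, hAU⟩ := hA.residualEq_isOpen
  have hAU' : {x | x ∈ A ↔ x ∈ U} ∈ residual (ℕ → Bool) := eventuallyEq_set.mp hAU
  rcases eq_empty_or_nonempty U with rfl | ⟨η₀, hη₀⟩
  · left
    exact mem_of_superset hAU' fun x hx hxA => hx.mp hxA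
  · right
    obtain ⟨n, hcyl⟩ := cyl_subset hUo hη₀
    have hcompl : IsMeagre {x | x ∈ A ↔ x ∈ U}ᶜ := by
      rw [IsMeagre, compl_compl]; exact hAU'
    have hmeag : IsMeagre (cyl n η₀ \ A) := by
      refine hcompl.mono fun x hx => ?_
      rcases hx with ⟨hxc, hxA⟩
      exact fun hiff => hxA (hiff.mpr (hcyl hxc))
    -- extend a finite string to an element of `2^ℕ`
    set Cof : (Fin n → Bool) → (ℕ → Bool) :=
      fun d i => if h : i < n then d ⟨i, h⟩ else false with hCof
    have hcover : Aᶜ ⊆ ⋃ d : Fin n → Bool, (xorH (Cof d)) ⁻¹' (cyl n η₀ \ A) := by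
      intro x hx
      refine mem_iUnion.mpr ⟨fun j => xor (x j) (η₀ j), ?_, ?_⟩
      · -- lands in the cylinder
        intro i hi
        show xor (x i) (Cof (fun j => xor (x j) (η₀ j)) i) = η₀ i
        simp only [hCof, dif_pos hi]
        cases x i <;> cases η₀ i <;> rfl
      · -- not in A, by invariance
        intro hmem
        have hdiff : {i | x i ≠ (xorH (Cof fun j => xor (x j) (η₀ j))) x i}.Finite := by
          refine (Set.finite_Iio n).subset fun i hi => ?_
          by_contra hge
          apply hi
          show x i = xor (x i) (Cof (fun j => xor (x j) (η₀ j)) i)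
          simp only [hCof, dif_neg (fun h => hge (Set.mem_Iio.mpr h))]
          cases x i <;> rfl
        exact hx ((hinv _ _ hdiff).mpr hmem)
    have hunion : IsMeagre (⋃ d : Fin n → Bool, (xorH (Cof d)) ⁻¹' (cyl n η₀ \ A)) := by
      rw [IsMeagre, compl_iUnion]
      exact countable_iInter_mem.mpr fun d =>
        (hmeag.preimage_of_isOpenMap (xorH (Cof d)).continuous (xorH (Cof d)).isOpenMap)
    exact hunion.mono hcover

/-- Each `E₀`-class is countable. -/
lemma class_countable (η : ℕ → Bool) :
    {η' : ℕ → Bool | {n | η n ≠ η' n}.Finite}.Countable := by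
  have hsub : {η' : ℕ → Bool | {n | η n ≠ η' n}.Finite} ⊆
      Set.range (fun F : Finset ℕ => fun n => xor (η n) (decide (n ∈ F))) := by
    intro η' hη'
    refine ⟨hη'.toFinset, ?_⟩
    funext n
    show xor (η n) (decide (n ∈ hη'.toFinset)) = η' n
    by_cases h : η n = η' n
    · have hn : n ∉ hη'.toFinset := by simp [h]
      have hd : decide (n ∈ hη'.toFinset) = false := decide_eq_false hn
      rw [hd, Bool.xor_false, h]
    · have hn : n ∈ hη'.toFinset := by simp [h]
      have hd : decide (n ∈ hη'.toFinset) = true := decide_eq_true hn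
      rw [hd, Bool.xor_true]
      cases hx : η n <;> cases hy : η' n <;> simp_all
  exact (Set.countable_range _).mono hsub

/-- Countable sets are meager in `2^ℕ`. -/
lemma countable_isMeagre {s : Set (ℕ → Bool)} (hs : s.Countable) : IsMeagre s := by
  have hsing : ∀ x : ℕ → Bool, IsNowhereDense ({x} : Set (ℕ → Bool)) := by
    intro x
    rw [IsClosed.isNowhereDense_iff isClosed_singleton]
    by_contra h
    obtain ⟨y, hy⟩ := nonempty_iff_ne_empty.mpr h
    have hyx : y ∈ ({x} : Set (ℕ → Bool)) := interior_subset hy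
    rw [Set.mem_singleton_iff] at hyx
    subst hyx
    obtain ⟨n, hn⟩ := cyl_subset isOpen_interior hy
    set z : ℕ → Bool := fun i => if i = n then !(y n) else y i with hz
    have hzc : z ∈ cyl n y := fun i hi => by simp [hz, Nat.ne_of_lt hi]
    have hmem : z ∈ ({y} : Set (ℕ → Bool)) := interior_subset (hn hzc)
    have hzn : z n = !(y n) := by simp [hz]
    rw [Set.mem_singleton_iff] at hmem
    rw [hmem] at hzn
    exact absurd hzn (by cases y n <;> simp)
  rw [isMeagre_iff_countable_union_isNowhereDense]
  refine ⟨(fun x => ({x} : Set (ℕ → Bool))) '' s, ?_, hs.image _, ?_⟩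
  · rintro t ⟨x, -, rfl⟩; exact hsing x
  · intro x hx; exact ⟨{x}, ⟨x, hx, rfl⟩, rfl⟩

end E0Aux

open E0Aux

/-- Non-smoothness of `E₀`, restated: there is no Borel map `g` from `2^ℕ` to a
Polish space inducing an injection of the quotient `2^ℕ/E₀`, i.e. with
`g η = g η' ↔ η E₀ η'`. -/
theorem no_borel_injection_of_E0_quotient :
    ¬ ∃ (Z : Type) (tZ : TopologicalSpace Z), @PolishSpace Z tZ ∧
      ∃ g : (ℕ → Bool) → Z, @Measurable _ Z _ (@borel Z tZ) g ∧
        ∀ η η' : ℕ → Bool, g η = g η' ↔ {n : ℕ | η n ≠ η' n}.Finite := by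
  classical
  rintro ⟨Z, tZ, hPol, g, hg, hiff⟩
  letI := tZ
  haveI := hPol
  letI : MeasurableSpace Z := borel Z
  haveI : BorelSpace Z := ⟨rfl⟩
  set B := TopologicalSpace.countableBasis Z with hBdef
  have hB : TopologicalSpace.IsTopologicalBasis B := TopologicalSpace.isBasis_countableBasis Z
  have hBc : B.Countable := TopologicalSpace.countable_countableBasis Z
  set S : Set Z → Set (ℕ → Bool) :=
    fun U => if IsMeagre (g ⁻¹' U) then (g ⁻¹' U)ᶜ else g ⁻¹' U with hSdef
  have hres : ∀ U ∈ B, S U ∈ residual (ℕ → Bool) := by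
    intro U hU
    have hUo : IsOpen U := hB.isOpen hU
    have hbm : BaireMeasurableSet (g ⁻¹' U) := (hg hUo.measurableSet).baireMeasurableSet
    have hinv : ∀ η η' : ℕ → Bool, {n | η n ≠ η' n}.Finite →
        (η ∈ g ⁻¹' U ↔ η' ∈ g ⁻¹' U) := by
      intro η η' h
      have : g η = g η' := (hiff η η').mpr h
      simp [Set.mem_preimage, this]
    by_cases h : IsMeagre (g ⁻¹' U)
    · simp only [hSdef]
      rw [if_pos h]
      exact h
    · rcases meager_or_comeager hbm hinv with hm | hm
      · exact absurd hm h
      · simp only [hSdef]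
        rw [if_neg h]
        rw [IsMeagre, compl_compl] at hm
        exact hm
  set C := ⋂ U ∈ B, S U with hCdef
  have hC : C ∈ residual (ℕ → Bool) := (countable_bInter_mem hBc).mpr hres
  have hCne : C.Nonempty := (dense_of_mem_residual hC).nonempty
  have hconst : ∀ x ∈ C, ∀ y ∈ C, g x = g y := by
    intro x hx y hy
    by_contra hne
    obtain ⟨V, W, hVo, hWo, hxV, hyW, hVW⟩ := t2_separation hne
    obtain ⟨U, hUB, hgxU, hUV⟩ := hB.exists_subset_of_mem_open hxV hVo
    have hxS : x ∈ S U := Set.mem_iInter₂.mp hx U hUB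
    have hyS : y ∈ S U := Set.mem_iInter₂.mp hy U hUB
    by_cases h : IsMeagre (g ⁻¹' U)
    · simp only [hSdef] at hxS
      rw [if_pos h] at hxS
      exact hxS hgxU
    · simp only [hSdef] at hyS
      rw [if_neg h] at hyS
      exact Set.disjoint_left.mp hVW (hUV hyS) hyW
  obtain ⟨x₀, hx₀⟩ := hCne
  have hsub : C ⊆ {η' : ℕ → Bool | {n | x₀ n ≠ η' n}.Finite} :=
    fun y hy => (hiff x₀ y).mp (hconst x₀ hx₀ y hy)
  have hCc : C.Countable := (class_countable x₀).mono hsub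
  have hCm : IsMeagre C := countable_isMeagre hCc
  have hempty : C ∩ Cᶜ ∈ residual (ℕ → Bool) := inter_mem hC hCm
  rw [Set.inter_compl_self] at hempty
  exact Set.not_nonempty_empty (dense_of_mem_residual hempty).nonempty
end
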